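/- arXiv:2210.07996 — 3 statements merged into one kernel-verified Lean document; each statement's English description precedes it below -/
import Mathlib

section
/- For any feasible online policy π, and any family of relaxations V̄_c(I_t) satisfying E[V̄_C(I_1)] ≥ E[V^off(I)] and V̄_c(I_{T+1}) = 0 for every capacity vector c, the regret satisfies Regret(π) ≤ Σ_{t=1}^T E[Myopic_t(π, c̃_t^π)], where c̃_t^π denotes the (random) remaining capacity vector at the start of period t under π and Myopic_t(π,c) = E[V̄_c(I_t) − V̄_{c − ã_t·x̃_t^π}(I_{t+1}) − r̃_t·x̃_t^π]. -/
open MeasureTheory Set Finset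

/-- The offline optimum `V^off(I)`: optimal integral allocation in hindsight on
the sample path with rewards `R · ω` and sizes `A · ω`, initial capacities `C`. -/
noncomputable def Voff (m T : ℕ) (R : Fin T → ℝ) (A : Fin T → Fin m → ℝ)
    (C : Fin m → ℝ) : ℝ :=
  sSup {v : ℝ | ∃ x : Fin T → ℝ, (∀ t, x t = 0 ∨ x t = 1) ∧
    (∀ i, ∑ t, A t i * x t ≤ C i) ∧ v = ∑ t, R t * x t}

private lemma tel : ∀ (n : ℕ) (f : Fin (n + 1) → ℝ),
    ∑ t : Fin n, (f t.castSucc - f t.succ) = f 0 - f (Fin.last n) := by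
  intro n
  induction n with
  | zero => intro f; simp
  | succ n ih =>
    intro f
    rw [Fin.sum_univ_castSucc]
    have h := ih (fun i => f i.castSucc)
    simp only [Fin.succ_castSucc] at h ⊢
    rw [h]
    simp only [Fin.succ_last, Fin.castSucc_zero]
    ring

/-- **Lemma 1 (myopic-regret decomposition).**  For any feasible online policy `π`
(binary decisions `x`, capacity process `c` with `c₀ = C`,
`c_{t+1} = c_t − ã_t·x̃_t^π`), and any family of relaxations `V̄_c(I_t)` with
`E[V̄_C(I_1)] ≥ E[V^off(I)]` and `V̄_c(I_{T+1}) = 0` for every `c`, the regret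
satisfies `Regret(π) ≤ ∑_{t=1}^T E[Myopic_t(π, c̃_t^π)]`, where
`Myopic_t(π,c) = E[V̄_c(I_t) − V̄_{c−ã_t·x̃_t^π}(I_{t+1}) − r̃_t·x̃_t^π]`. -/
theorem stmt0
    {Ωs : Type*} [MeasurableSpace Ωs] (μ : Measure Ωs) [IsProbabilityMeasure μ]
    (m T : ℕ)
    (R : Fin T → Ωs → ℝ) (A : Fin T → Ωs → Fin m → ℝ)
    (C : Fin m → ℝ)
    -- the online policy: binary decisions, feasible w.r.t. the capacities
    (x : Fin T → Ωs → ℝ)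
    (hx01 : ∀ t ω, x t ω = 0 ∨ x t ω = 1)
    (hfeas : ∀ ω i, ∑ t, A t ω i * x t ω ≤ C i)
    -- remaining-capacity process of the policy
    (c : Fin (T + 1) → Ωs → Fin m → ℝ)
    (hc0 : ∀ ω, c 0 ω = C)
    (hcsucc : ∀ (t : Fin T) ω, c t.succ ω = c t.castSucc ω - x t ω • A t ω)
    -- the relaxation family `V̄`, indexed by capacity and starting period
    (Vbar : (Fin m → ℝ) → Fin (T + 1) → Ωs → ℝ)
    (hVlast : ∀ cv ω, Vbar cv (Fin.last T) ω = 0)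
    (hVub : ∫ ω, Voff m T (fun t => R t ω) (fun t => A t ω) C ∂μ ≤
      ∫ ω, Vbar C 0 ω ∂μ)
    -- integrability of the relevant random quantities
    (hIntV : ∀ t : Fin (T + 1), Integrable (fun ω => Vbar (c t ω) t ω) μ)
    (hIntR : ∀ t : Fin T, Integrable (fun ω => R t ω * x t ω) μ)
    (hIntOff : Integrable (fun ω => Voff m T (fun t => R t ω) (fun t => A t ω) C) μ) :
    (∫ ω, Voff m T (fun t => R t ω) (fun t => A t ω) C ∂μ)
      - (∫ ω, ∑ t, R t ω * x t ω ∂μ) ≤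
    ∑ t : Fin T, ∫ ω,
      (Vbar (c t.castSucc ω) t.castSucc ω - Vbar (c t.succ ω) t.succ ω
        - R t ω * x t ω) ∂μ := by
  set f : Fin (T + 1) → ℝ := fun t => ∫ ω, Vbar (c t ω) t ω ∂μ with hf
  have hsplit : ∀ t : Fin T,
      (∫ ω, (Vbar (c t.castSucc ω) t.castSucc ω - Vbar (c t.succ ω) t.succ ω
        - R t ω * x t ω) ∂μ) = f t.castSucc - f t.succ - ∫ ω, R t ω * x t ω ∂μ := by
    intro t
    have h1 : Integrable (fun ω => Vbar (c t.castSucc ω) t.castSucc ω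
        - Vbar (c t.succ ω) t.succ ω) μ := (hIntV t.castSucc).sub (hIntV t.succ)
    rw [integral_sub h1 (hIntR t), integral_sub (hIntV t.castSucc) (hIntV t.succ)]
  have htel : ∑ t : Fin T, (f t.castSucc - f t.succ) = f 0 - f (Fin.last T) :=
    tel T f
  have hlast : f (Fin.last T) = 0 := by
    simp [hf, hVlast]
  have h0 : f 0 = ∫ ω, Vbar C 0 ω ∂μ := by
    simp only [hf]
    exact integral_congr_ae (Filter.Eventually.of_forall fun ω => by
      show Vbar (c 0 ω) 0 ω = Vbar C 0 ω
      rw [hc0])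
  have hsum : (∫ ω, ∑ t, R t ω * x t ω ∂μ) = ∑ t : Fin T, ∫ ω, R t ω * x t ω ∂μ :=
    integral_finset_sum _ (fun t _ => hIntR t)
  calc (∫ ω, Voff m T (fun t => R t ω) (fun t => A t ω) C ∂μ)
      - (∫ ω, ∑ t, R t ω * x t ω ∂μ)
      ≤ (∫ ω, Vbar C 0 ω ∂μ) - (∫ ω, ∑ t, R t ω * x t ω ∂μ) := by linarith
    _ = ∑ t : Fin T, ∫ ω,
        (Vbar (c t.castSucc ω) t.castSucc ω - Vbar (c t.succ ω) t.succ ω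
          - R t ω * x t ω) ∂μ := by
        rw [hsum]
        simp only [hsplit]
        rw [Finset.sum_sub_distrib, htel, hlast, h0]
        ring
end

section
/- Under Assumption 3, for the M̂-estimator policy π (serve query t iff r̃_t ≥ M̂_{c̃_t^π, ã_t} and c̃_t^π ≥ ã_t, for an estimator M̂ independent of the future instance I_{t+1}), for every t ∈ [T]: Myopic_t(π, c̃_t^π) ≤ 2ᾱ·E_{ã_t}[1{c̃_t^π ≥ ã_t}·Var_{I_{t+1}}(M_{c̃_t^π, ã_t}(I_{t+1}))] + E_{I_t}[G_{c̃_t^π}(I_t)] + 2ᾱ·E_{ã_t}[1{c̃_t^π ≥ ã_t}·(M̂_{c̃_t^π, ã_t} − E_{I_{t+1}}[M_{c̃_t^π, ã_t}(I_{t+1})])²], where the myopic term is defined relative to the LP relaxation V̄^Off. -/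
open MeasureTheory ProbabilityTheory Set Finset
open scoped Classical

/-- The LP (offline) relaxation `V̄^Off_c` of an instance of `N` queries. -/
noncomputable def VOffLP (m N : ℕ) (sz : Fin N → Fin m → ℝ) (rw : Fin N → ℝ)
    (c : Fin m → ℝ) : ℝ :=
  sSup {v : ℝ | ∃ x : Fin N → ℝ, (∀ τ, x τ ∈ Icc (0:ℝ) 1) ∧
    (∀ i, ∑ τ, sz τ i * x τ ≤ c i) ∧ v = ∑ τ, rw τ * x τ}

/-! Splitting the `(N+1)`-query LP at an optimal solution `x̃*` writes its value as
`r̃_t x̃*_t` plus the LP value of the future instance with the residual capacity. Subtracting the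
policy's one-step value leaves the rounding gap plus `(x̃^round − x̃^π)(r̃_t − M)`, which is the
loss of thresholding the current reward at `M̂` instead of at the marginal value `M`. The current
query is independent of `M`, so for `M = y` and a query of type `j` this loss is at most
`|M̂ − y|` times the mass that the reward law puts between `M̂` and `y`, that is at most
`ᾱ (M̂ − y)²` by the density bound. Averaging over `y` and splitting the mean squared error into
variance and squared bias gives the two terms. The optimal duals lie in the compact set `Ω`, so
the marginal values are bounded and every integral is finite. -/

namespace VOffLP

variable {m N : ℕ} {sz : Fin N → Fin m → ℝ} {rw : Fin N → ℝ} {c : Fin m → ℝ}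

lemma bddAbove_values : BddAbove {v : ℝ | ∃ x : Fin N → ℝ, (∀ τ, x τ ∈ Icc (0:ℝ) 1) ∧
    (∀ i, ∑ τ, sz τ i * x τ ≤ c i) ∧ v = ∑ τ, rw τ * x τ} := by
  refine ⟨∑ τ, |rw τ|, ?_⟩
  rintro _ ⟨x, hx, -, rfl⟩
  refine Finset.sum_le_sum fun τ _ => (le_abs_self _).trans ?_
  rw [abs_mul]
  exact mul_le_of_le_one_right (abs_nonneg _) (abs_le.2 ⟨by linarith [(hx τ).1], (hx τ).2⟩)

lemma le_of_feasible {x : Fin N → ℝ} (hx : ∀ τ, x τ ∈ Icc (0:ℝ) 1)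
    (hfeas : ∀ i, ∑ τ, sz τ i * x τ ≤ c i) :
    ∑ τ, rw τ * x τ ≤ VOffLP m N sz rw c :=
  le_csSup bddAbove_values ⟨x, hx, hfeas, rfl⟩

lemma le_of_forall_feasible {b : ℝ}
    (hne : ∃ x : Fin N → ℝ, (∀ τ, x τ ∈ Icc (0:ℝ) 1) ∧ ∀ i, ∑ τ, sz τ i * x τ ≤ c i)
    (h : ∀ x : Fin N → ℝ, (∀ τ, x τ ∈ Icc (0:ℝ) 1) → (∀ i, ∑ τ, sz τ i * x τ ≤ c i) →
      ∑ τ, rw τ * x τ ≤ b) :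
    VOffLP m N sz rw c ≤ b := by
  obtain ⟨x, hx, hfeas⟩ := hne
  refine csSup_le ⟨_, x, hx, hfeas, rfl⟩ ?_
  rintro _ ⟨x', hx', hfeas', rfl⟩
  exact h x' hx' hfeas'

lemma eq_of_isOptimal {x : Fin N → ℝ} (hx : ∀ τ, x τ ∈ Icc (0:ℝ) 1)
    (hfeas : ∀ i, ∑ τ, sz τ i * x τ ≤ c i)
    (hopt : ∀ x' : Fin N → ℝ, (∀ τ, x' τ ∈ Icc (0:ℝ) 1) →
      (∀ i, ∑ τ, sz τ i * x' τ ≤ c i) → ∑ τ, rw τ * x' τ ≤ ∑ τ, rw τ * x τ) :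
    VOffLP m N sz rw c = ∑ τ, rw τ * x τ :=
  (le_of_forall_feasible ⟨x, hx, hfeas⟩ hopt).antisymm (le_of_feasible hx hfeas)

lemma exists_feasible_of_nonneg (hc : ∀ i, 0 ≤ c i) :
    ∃ x : Fin N → ℝ, (∀ τ, x τ ∈ Icc (0:ℝ) 1) ∧ ∀ i, ∑ τ, sz τ i * x τ ≤ c i :=
  ⟨0, fun _ => ⟨le_rfl, zero_le_one⟩, fun i => by simpa using hc i⟩

lemma mono {c' : Fin m → ℝ} (hc : ∀ i, 0 ≤ c i) (hcc' : ∀ i, c i ≤ c' i) :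
    VOffLP m N sz rw c ≤ VOffLP m N sz rw c' :=
  le_of_forall_feasible (exists_feasible_of_nonneg hc) fun _ hx hfeas =>
    le_of_feasible hx fun i => (hfeas i).trans (hcc' i)

lemma le_dual (hc : ∀ i, 0 ≤ c i) {μd : Fin m → ℝ} (hμd : ∀ i, 0 ≤ μd i) :
    VOffLP m N sz rw c ≤ (∑ i, c i * μd i) + ∑ τ, max (rw τ - ∑ i, sz τ i * μd i) 0 := by
  refine le_of_forall_feasible (exists_feasible_of_nonneg hc) fun x hx hfeas => ?_
  have hprice : ∑ τ, (∑ i, sz τ i * μd i) * x τ ≤ ∑ i, c i * μd i := by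
    calc ∑ τ, (∑ i, sz τ i * μd i) * x τ = ∑ i, (∑ τ, sz τ i * x τ) * μd i := by
          simp only [Finset.sum_mul]
          rw [Finset.sum_comm]
          exact Finset.sum_congr rfl fun _ _ => Finset.sum_congr rfl fun _ _ => by ring
      _ ≤ ∑ i, c i * μd i :=
          Finset.sum_le_sum fun i _ => mul_le_mul_of_nonneg_right (hfeas i) (hμd i)
  have hreduced : ∀ τ, (rw τ - ∑ i, sz τ i * μd i) * x τ
      ≤ max (rw τ - ∑ i, sz τ i * μd i) 0 := fun τ => by
    nlinarith [(hx τ).1, (hx τ).2, le_max_left (rw τ - ∑ i, sz τ i * μd i) 0,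
      le_max_right (rw τ - ∑ i, sz τ i * μd i) 0]
  calc ∑ τ, rw τ * x τ
      = ∑ τ, (rw τ - ∑ i, sz τ i * μd i) * x τ + ∑ τ, (∑ i, sz τ i * μd i) * x τ := by
        rw [← Finset.sum_add_distrib]
        exact Finset.sum_congr rfl fun _ _ => by ring
    _ ≤ _ := by linarith [Finset.sum_le_sum fun τ (_ : τ ∈ Finset.univ) => hreduced τ]

lemma sub_le_of_eq_dual {c' μd : Fin m → ℝ} (hc : ∀ i, 0 ≤ c i) (hμd : ∀ i, 0 ≤ μd i)
    (hdual : VOffLP m N sz rw c' =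
      (∑ i, c' i * μd i) + ∑ τ, max (rw τ - ∑ i, sz τ i * μd i) 0) :
    VOffLP m N sz rw c - VOffLP m N sz rw c' ≤ ∑ i, (c i - c' i) * μd i := by
  have := le_dual (sz := sz) (rw := rw) hc hμd
  simp only [sub_mul, Finset.sum_sub_distrib]
  linarith

lemma lipschitzWith_rw (sz : Fin N → Fin m → ℝ) (c : Fin m → ℝ) :
    LipschitzWith N (fun rw => VOffLP m N sz rw c) := by
  refine LipschitzWith.of_le_add_mul _ fun u u' => ?_
  by_cases hne : ∃ x : Fin N → ℝ, (∀ τ, x τ ∈ Icc (0:ℝ) 1) ∧ ∀ i, ∑ τ, sz τ i * x τ ≤ c i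
  · refine le_of_forall_feasible hne fun x hx hfeas => ?_
    have hterm : ∀ τ, u τ * x τ ≤ u' τ * x τ + dist u u' := fun τ => by
      have h1 : |u τ - u' τ| ≤ dist u u' := by
        rw [← Real.dist_eq]; exact dist_le_pi_dist u u' τ
      nlinarith [(hx τ).1, (hx τ).2, abs_le.1 h1]
    have := le_of_feasible (rw := u') hx hfeas
    calc ∑ τ, u τ * x τ ≤ ∑ τ, (u' τ * x τ + dist u u') := Finset.sum_le_sum fun τ _ => hterm τ
      _ ≤ _ := by simp [Finset.sum_add_distrib]; linarith
  · have hempty : ∀ w : Fin N → ℝ, VOffLP m N sz w c = 0 := fun w => by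
      refine (congrArg sSup (Set.eq_empty_of_forall_notMem ?_)).trans Real.sSup_empty
      rintro _ ⟨x, hx, hfeas, -⟩
      exact hne ⟨x, hx, hfeas⟩
    rw [hempty, hempty]
    positivity

lemma measurable_comp {Ω : Type*} [MeasurableSpace Ω] {n : ℕ} (a : Fin n → Fin m → ℝ)
    (c : Fin m → ℝ) {J : Fin N → Ω → Fin n} {R : Fin N → Ω → ℝ}
    (hJ : ∀ τ, Measurable (J τ)) (hR : ∀ τ, Measurable (R τ)) :
    Measurable fun ω => VOffLP m N (fun τ => a (J τ ω)) (fun τ => R τ ω) c := by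
  have : Measurable fun q : (Fin N → ℝ) × (Fin N → Fin n) =>
      VOffLP m N (fun τ => a (q.2 τ)) q.1 c :=
    measurable_from_prod_countable_left fun pat =>
      (lipschitzWith_rw (fun τ => a (pat τ)) c).continuous.measurable
  exact this.comp ((measurable_pi_lambda _ hR).prodMk (measurable_pi_lambda _ hJ))

lemma eq_add_of_isOptimal {sz : Fin (N + 1) → Fin m → ℝ} {rw : Fin (N + 1) → ℝ}
    {x : Fin (N + 1) → ℝ} (hx : ∀ τ, x τ ∈ Icc (0:ℝ) 1)
    (hfeas : ∀ i, ∑ τ, sz τ i * x τ ≤ c i)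
    (hopt : ∀ x' : Fin (N + 1) → ℝ, (∀ τ, x' τ ∈ Icc (0:ℝ) 1) →
      (∀ i, ∑ τ, sz τ i * x' τ ≤ c i) → ∑ τ, rw τ * x' τ ≤ ∑ τ, rw τ * x τ) :
    VOffLP m (N + 1) sz rw c =
      rw 0 * x 0 + VOffLP m N (fun τ => sz τ.succ) (fun τ => rw τ.succ) (c - x 0 • sz 0) := by
  have hcap : ∀ (y : Fin N → ℝ) i, (∑ τ, sz τ.succ i * y τ ≤ (c - x 0 • sz 0) i ↔
      ∑ τ, sz τ i * (Fin.cons (x 0) y : Fin (N + 1) → ℝ) τ ≤ c i) := fun y i => by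
    simp only [Fin.sum_univ_succ, Fin.cons_zero, Fin.cons_succ, Pi.sub_apply, Pi.smul_apply,
      smul_eq_mul]
    constructor <;> intro h <;> linarith
  have htail : VOffLP m N (fun τ => sz τ.succ) (fun τ => rw τ.succ) (c - x 0 • sz 0) =
      ∑ τ : Fin N, rw τ.succ * x τ.succ := by
    refine eq_of_isOptimal (fun τ => hx τ.succ) (fun i => ?_) fun y hy hyfeas => ?_
    · rw [hcap]
      simpa only [Fin.sum_univ_succ, Fin.cons_zero, Fin.cons_succ] using hfeas i
    · have hcons := hopt (Fin.cons (x 0) y : Fin (N + 1) → ℝ) (fun τ => Fin.cases (hx 0) hy τ)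
        fun i => (hcap y i).1 (hyfeas i)
      simp only [Fin.sum_univ_succ, Fin.cons_zero, Fin.cons_succ] at hcons
      linarith
  rw [eq_of_isOptimal hx hfeas hopt, htail, Fin.sum_univ_succ]

lemma exists_abs_sub_le {ι : Type*} {Ωd : Set (Fin m → ℝ)}
    (hΩd : IsCompact Ωd) (hΩpos : ∀ μd ∈ Ωd, ∀ i, 0 ≤ μd i)
    {sz : ι → Fin N → Fin m → ℝ} {rw : ι → Fin N → ℝ} {c a : Fin m → ℝ}
    (ha : ∀ i, 0 ≤ a i) (hac : ∀ i, a i ≤ c i)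
    (hdual : ∀ ω, ∃ μd ∈ Ωd, VOffLP m N (sz ω) (rw ω) (c - a) =
      (∑ i, (c - a) i * μd i) + ∑ τ, max (rw ω τ - ∑ i, sz ω τ i * μd i) 0) :
    ∃ C, ∀ ω, |VOffLP m N (sz ω) (rw ω) c - VOffLP m N (sz ω) (rw ω) (c - a)| ≤ C := by
  obtain ⟨K, hK⟩ := hΩd.bddAbove_image
    (f := fun μd => ∑ i, a i * μd i) (by fun_prop : Continuous _).continuousOn
  refine ⟨K, fun ω => ?_⟩
  obtain ⟨μd, hμd, hrep⟩ := hdual ω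
  have hca : ∀ i, 0 ≤ (c - a) i := fun i => sub_nonneg.2 (hac i)
  rw [abs_of_nonneg (sub_nonneg.2 (mono hca fun i => by simp [ha i]))]
  calc _ ≤ ∑ i, (c i - (c - a) i) * μd i :=
        sub_le_of_eq_dual (fun i => (ha i).trans (hac i)) (hΩpos μd hμd) hrep
    _ = ∑ i, a i * μd i := by simp
    _ ≤ K := hK ⟨μd, hμd, rfl⟩

end VOffLP

lemma myopic_eq_roundingGap_add {m : ℕ} {f : (Fin m → ℝ) → ℝ} {V r x₀ xr xπ : ℝ}
    {c a : Fin m → ℝ} (hV : V = r * x₀ + f (c - x₀ • a)) (hxπ : xπ = 0 ∨ xπ = 1) :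
    V - f (c - xπ • a) - r * xπ =
      (r * (x₀ - xr) + f (c - x₀ • a) - (xr * f (c - a) + (1 - xr) * f c))
        + (xr - xπ) * (r - (f c - f (c - a))) := by
  rcases hxπ with rfl | rfl <;> simp only [zero_smul, one_smul, sub_zero, hV] <;> ring

section ThresholdLoss

/-- The loss, measured against the marginal value `y`, of accepting a reward `r` at the
threshold `θ` instead of `y`. -/
noncomputable def thresholdLoss (θ y r : ℝ) : ℝ :=
  ((if y ≤ r then 1 else 0) - (if θ ≤ r then 1 else 0)) * (r - y)

lemma thresholdLoss_nonneg (θ y r : ℝ) : 0 ≤ thresholdLoss θ y r := by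
  unfold thresholdLoss
  split_ifs <;> linarith

lemma ite_and_sub_ite_and_mul_eq (P : Prop) [Decidable P] (θ y r : ℝ) :
    ((if y ≤ r ∧ P then (1 : ℝ) else 0) - (if θ ≤ r ∧ P then 1 else 0)) * (r - y) =
      if P then thresholdLoss θ y r else 0 := by
  by_cases hP : P <;> simp [hP, thresholdLoss]

lemma thresholdLoss_le_indicator (θ y r : ℝ) :
    thresholdLoss θ y r ≤ (Ico (min θ y) (max θ y)).indicator (fun _ => |θ - y|) r := by
  unfold thresholdLoss
  simp only [Set.indicator_apply, Set.mem_Ico, min_le_iff, lt_max_iff]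
  split_ifs <;> grind

lemma abs_thresholdLoss_le (θ y r : ℝ) : |thresholdLoss θ y r| ≤ |θ - y| := by
  rw [abs_of_nonneg (thresholdLoss_nonneg θ y r)]
  refine (thresholdLoss_le_indicator θ y r).trans ?_
  exact Set.indicator_le_self' (fun _ _ => abs_nonneg _) r

lemma measurable_thresholdLoss (θ : ℝ) : Measurable (Function.uncurry (thresholdLoss θ)) := by
  have hindicator : ∀ f : ℝ × ℝ → ℝ, Measurable f →
      Measurable fun q : ℝ × ℝ => if f q ≤ q.2 then (1 : ℝ) else 0 := fun f hf =>
    Measurable.ite (measurableSet_le hf measurable_snd) measurable_const measurable_const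
  exact ((hindicator _ measurable_fst).sub (hindicator _ measurable_const)).mul
    (measurable_snd.sub measurable_fst)

lemma measureReal_Ico_le_of_cdf {ν : Measure ℝ} [IsFiniteMeasure ν] {α : ℝ} (hα : 0 ≤ α)
    (hcdf : ∀ x y, x ≤ y → ν.real (Iic y) - ν.real (Iic x) ≤ α * (y - x))
    {x y : ℝ} (hxy : x ≤ y) : ν.real (Ico x y) ≤ α * (y - x) := by
  refine le_of_forall_pos_le_add fun ε hε => ?_
  set δ := ε / (α + 1)
  have hδ : 0 < δ := by positivity
  have hsub : Ico x y ⊆ Iic y \ Iic (x - δ) := fun r hr =>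
    ⟨hr.2.le, fun h => by simp only [Set.mem_Iic] at h; linarith [hr.1]⟩
  have hαδ : α * δ ≤ ε := by
    rw [mul_div_assoc', div_le_iff₀ (by linarith)]
    nlinarith
  calc ν.real (Ico x y) ≤ ν.real (Iic y \ Iic (x - δ)) := measureReal_mono hsub
    _ = ν.real (Iic y) - ν.real (Iic (x - δ)) :=
        measureReal_sdiff (Iic_subset_Iic.2 (by linarith)) measurableSet_Iic
    _ ≤ α * (y - (x - δ)) := hcdf _ _ (by linarith)
    _ ≤ α * (y - x) + ε := by nlinarith

lemma integral_thresholdLoss_le {ν : Measure ℝ} [IsFiniteMeasure ν] {α : ℝ} (hα : 0 ≤ α)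
    (hcdf : ∀ x y, x ≤ y → ν.real (Iic y) - ν.real (Iic x) ≤ α * (y - x)) (θ y : ℝ) :
    ∫ r, thresholdLoss θ y r ∂ν ≤ α * (θ - y) ^ 2 :=
  calc ∫ r, thresholdLoss θ y r ∂ν
      ≤ ∫ r, (Ico (min θ y) (max θ y)).indicator (fun _ => |θ - y|) r ∂ν :=
        integral_mono_of_nonneg (.of_forall (thresholdLoss_nonneg θ y))
          ((integrable_const _).indicator measurableSet_Ico)
          (.of_forall (thresholdLoss_le_indicator θ y))
    _ = ν.real (Ico (min θ y) (max θ y)) * |θ - y| := by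
        rw [integral_indicator_const _ measurableSet_Ico, smul_eq_mul]
    _ ≤ α * (max θ y - min θ y) * |θ - y| :=
        mul_le_mul_of_nonneg_right (measureReal_Ico_le_of_cdf hα hcdf min_le_max) (abs_nonneg _)
    _ = α * (θ - y) ^ 2 := by rw [max_sub_min_eq_abs', mul_assoc, ← sq, sq_abs]

end ThresholdLoss

section Independence

variable {Ω : Type*} [MeasurableSpace Ω] {μ : Measure Ω}

lemma ProbabilityTheory.IndepFun.integral_comp_eq_integral_integral [IsFiniteMeasure μ]
    {α β : Type*} [MeasurableSpace α] [MeasurableSpace β] {X : Ω → α} {Y : Ω → β}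
    (hXY : IndepFun X Y μ) (hX : Measurable X) (hY : Measurable Y) {f : α × β → ℝ}
    (hf : Measurable f) (hfi : Integrable (fun ω => f (X ω, Y ω)) μ) :
    ∫ ω, f (X ω, Y ω) ∂μ = ∫ ω, ∫ ω', f (X ω', Y ω) ∂μ ∂μ := by
  have hmap := (indepFun_iff_map_prod_eq_prod_map_map hX.aemeasurable hY.aemeasurable).1 hXY
  have hprod : Integrable f ((μ.map X).prod (μ.map Y)) := by
    rw [← hmap]
    exact (integrable_map_measure hf.aestronglyMeasurable
      (hX.prodMk hY).aemeasurable).2 hfi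
  calc ∫ ω, f (X ω, Y ω) ∂μ = ∫ z, f z ∂(μ.map fun ω => (X ω, Y ω)) :=
        (integral_map (hX.prodMk hY).aemeasurable hf.aestronglyMeasurable).symm
    _ = ∫ y, ∫ x, f (x, y) ∂(μ.map X) ∂(μ.map Y) := by rw [hmap, integral_prod_symm f hprod]
    _ = ∫ ω, ∫ ω', f (X ω', Y ω) ∂μ ∂μ := by
        rw [integral_map hY.aemeasurable
          hf.stronglyMeasurable.integral_prod_left'.aestronglyMeasurable]
        refine integral_congr_ae (.of_forall fun ω => ?_)
        exact integral_map hX.aemeasurable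
          (hf.comp (measurable_id.prodMk measurable_const)).aestronglyMeasurable

lemma ProbabilityTheory.iIndepFun.indepFun_zero_comp_succ {N : ℕ} {β γ : Type*}
    [MeasurableSpace β] [MeasurableSpace γ] {W : Fin (N + 1) → Ω → β}
    (hW : iIndepFun W μ) (hWm : ∀ τ, Measurable (W τ)) {g : (Fin N → β) → γ}
    (hg : Measurable g) :
    IndepFun (W 0) (fun ω => g fun τ => W τ.succ ω) μ := by
  have hmem : ∀ τ : Fin N, τ.succ ∈ ({0}ᶜ : Finset (Fin (N + 1))) := fun τ => by
    simp [Fin.succ_ne_zero]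
  have hhead : Measurable fun w : ({0} : Finset (Fin (N + 1))) → β =>
      w ⟨0, Finset.mem_singleton_self 0⟩ := measurable_pi_apply _
  have htail : Measurable fun w : ({0}ᶜ : Finset (Fin (N + 1))) → β =>
      g fun τ => w ⟨τ.succ, hmem τ⟩ :=
    hg.comp (measurable_pi_lambda _ fun _ => measurable_pi_apply _)
  exact (hW.indepFun_finset {0} {0}ᶜ disjoint_compl_right hWm).comp hhead htail

lemma ProbabilityTheory.iIndepFun.indepFun_zero_VOffLP_sub {m N n : ℕ}
    {a : Fin n → Fin m → ℝ} {J : Fin (N + 1) → Ω → Fin n} {R : Fin (N + 1) → Ω → ℝ}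
    (hJ : ∀ τ, Measurable (J τ)) (hR : ∀ τ, Measurable (R τ))
    (hind : iIndepFun (fun τ ω => (J τ ω, R τ ω)) μ) (c c' : Fin m → ℝ) :
    IndepFun (fun ω => (J 0 ω, R 0 ω)) (fun ω =>
      VOffLP m N (fun τ => a (J τ.succ ω)) (fun τ => R τ.succ ω) c
        - VOffLP m N (fun τ => a (J τ.succ ω)) (fun τ => R τ.succ ω) c') μ := by
  have hfst : ∀ τ : Fin N, Measurable fun v : Fin N → Fin n × ℝ => (v τ).1 := by fun_prop
  have hsnd : ∀ τ : Fin N, Measurable fun v : Fin N → Fin n × ℝ => (v τ).2 := by fun_prop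
  exact hind.indepFun_zero_comp_succ (fun τ => (hJ τ).prodMk (hR τ))
    ((VOffLP.measurable_comp a c hfst hsnd).sub (VOffLP.measurable_comp a c' hfst hsnd))

lemma integral_ite_eq_mul_integral {β : Type*} [MeasurableSpace β]
    [MeasurableSingletonClass β] {J : Ω → β} {R : Ω → ℝ} (hJ : Measurable J)
    (hR : Measurable R) {j : β} {q : ℝ} (hq : 0 ≤ q) {ν : Measure ℝ}
    (hlaw : ∀ B, MeasurableSet B → μ {ω | J ω = j ∧ R ω ∈ B} = ENNReal.ofReal q * ν B)
    {g : ℝ → ℝ} (hg : Measurable g) :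
    ∫ ω, (if J ω = j then g (R ω) else 0) ∂μ = q * ∫ r, g r ∂ν := by
  have hJj : MeasurableSet {ω | J ω = j} := hJ (measurableSet_singleton j)
  have hmap : (μ.restrict {ω | J ω = j}).map R = ENNReal.ofReal q • ν := by
    ext B hB
    rw [Measure.map_apply hR hB, Measure.restrict_apply (hR hB), Measure.smul_apply,
      smul_eq_mul, ← hlaw B hB, Set.inter_comm]
    rfl
  calc ∫ ω, (if J ω = j then g (R ω) else 0) ∂μ
      = ∫ ω, g (R ω) ∂(μ.restrict {ω | J ω = j}) := by
        rw [← integral_indicator hJj]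
        rfl
    _ = q * ∫ r, g r ∂ν := by
        rw [← integral_map hR.aemeasurable hg.aestronglyMeasurable, hmap,
          integral_smul_measure, ENNReal.toReal_ofReal hq, smul_eq_mul]

end Independence

lemma integral_const_sub_sq {Ω : Type*} [MeasurableSpace Ω] {μ : Measure Ω}
    [IsProbabilityMeasure μ] {Y : Ω → ℝ} (hY : MemLp Y 2 μ) (θ : ℝ) :
    ∫ ω, (θ - Y ω) ^ 2 ∂μ = ∫ ω, (Y ω - ∫ ω', Y ω' ∂μ) ^ 2 ∂μ + (θ - ∫ ω', Y ω' ∂μ) ^ 2 := by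
  have hθY : MemLp (fun ω => θ - Y ω) 2 μ := (memLp_const θ).sub hY
  have hvar := variance_eq_sub hθY
  rw [variance_const_sub hY.aestronglyMeasurable, variance_eq_integral hY.aemeasurable,
    integral_sub (integrable_const θ) (hY.integrable one_le_two), integral_const] at hvar
  simp only [Pi.pow_apply, probReal_univ, one_smul] at hvar
  linarith

lemma integral_add_le_of_integrable_right {Ω : Type*} [MeasurableSpace Ω] {μ : Measure Ω}
    {f g : Ω → ℝ} (hg : Integrable g μ) (hg0 : ∀ ω, 0 ≤ g ω) {b : ℝ}
    (hgb : ∫ ω, g ω ∂μ ≤ b) :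
    ∫ ω, (f ω + g ω) ∂μ ≤ ∫ ω, f ω ∂μ + b := by
  by_cases hf : Integrable f μ
  · rw [integral_add hf hg]
    linarith
  · have hfg : ¬ Integrable (fun ω => f ω + g ω) μ := fun h =>
      hf ((h.sub hg).congr (.of_forall fun ω => by simp))
    rw [integral_undef hfg, integral_undef hf]
    linarith [integral_nonneg (μ := μ) (f := g) hg0]

lemma ite_eq_sum_filter_ite {β γ : Type*} [Fintype β] {s : β → Prop} [DecidablePred s]
    (F : β → γ → ℝ) (x : γ) (b : β) :
    (if s b then F b x else 0) = ∑ j ∈ Finset.univ.filter s, if b = j then F j x else 0 := by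
  rw [Finset.sum_ite_eq]
  simp

section PolicyError

variable {Ω : Type*} [MeasurableSpace Ω] {μ : Measure Ω} [IsProbabilityMeasure μ]
  {β : Type*} [MeasurableSpace β] [MeasurableSingletonClass β]
  {J : Ω → β} {R : Ω → ℝ}

lemma integrable_ite_thresholdLoss (hJ : Measurable J) (hR : Measurable R) {Y : Ω → ℝ}
    (hY : Measurable Y) {C : ℝ} (hYC : ∀ ω, |Y ω| ≤ C) (j : β) (θ : ℝ) :
    Integrable (fun ω => if J ω = j then thresholdLoss θ (Y ω) (R ω) else 0) μ := by
  refine (integrable_const (|θ| + C)).mono' ?_ (.of_forall fun ω => ?_)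
  · exact (Measurable.ite (hJ (measurableSet_singleton j))
      ((measurable_thresholdLoss θ).comp (hY.prodMk hR)) measurable_const).aestronglyMeasurable
  · rw [Real.norm_eq_abs]
    split_ifs
    · exact (abs_thresholdLoss_le θ _ _).trans ((abs_sub _ _).trans (by linarith [hYC ω]))
    · simpa using add_nonneg (abs_nonneg θ) ((abs_nonneg _).trans (hYC ω))

lemma integral_ite_thresholdLoss_le (hJ : Measurable J) (hR : Measurable R) {Y : Ω → ℝ}
    (hY : Measurable Y) {C : ℝ} (hYC : ∀ ω, |Y ω| ≤ C)
    (hind : IndepFun (fun ω => (J ω, R ω)) Y μ) {j : β} {q : ℝ} (hq : 0 ≤ q)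
    {ν : Measure ℝ} [IsFiniteMeasure ν]
    (hlaw : ∀ B, MeasurableSet B → μ {ω | J ω = j ∧ R ω ∈ B} = ENNReal.ofReal q * ν B)
    {α : ℝ} (hα : 0 ≤ α) (hcdf : ∀ x y, x ≤ y → ν.real (Iic y) - ν.real (Iic x) ≤ α * (y - x))
    (θ : ℝ) :
    ∫ ω, (if J ω = j then thresholdLoss θ (Y ω) (R ω) else 0) ∂μ
      ≤ q * (α * ∫ ω, (θ - Y ω) ^ 2 ∂μ) := by
  set f : (β × ℝ) × ℝ → ℝ := fun z => if z.1.1 = j then thresholdLoss θ z.2 z.1.2 else 0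
  have hf : Measurable f := Measurable.ite
    ((measurable_fst.comp measurable_fst) (measurableSet_singleton j))
    ((measurable_thresholdLoss θ).comp (measurable_snd.prodMk measurable_fst.snd))
    measurable_const
  have hsq : Integrable (fun ω => q * (α * (θ - Y ω) ^ 2)) μ := by
    refine (integrable_const (q * (α * (|θ| + C) ^ 2))).mono'
      (by fun_prop) (.of_forall fun ω => ?_)
    have hθY : |θ - Y ω| ≤ |θ| + C := (abs_sub _ _).trans (by linarith [hYC ω])
    rw [Real.norm_eq_abs, abs_of_nonneg (by positivity), ← sq_abs]
    gcongr
  calc ∫ ω, (if J ω = j then thresholdLoss θ (Y ω) (R ω) else 0) ∂μ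
      = ∫ ω, ∫ ω', f ((J ω', R ω'), Y ω) ∂μ ∂μ :=
        hind.integral_comp_eq_integral_integral (hJ.prodMk hR) hY hf
          (integrable_ite_thresholdLoss hJ hR hY hYC j θ)
    _ ≤ ∫ ω, q * (α * (θ - Y ω) ^ 2) ∂μ := by
        refine integral_mono_of_nonneg (.of_forall fun ω => integral_nonneg fun ω' => ?_) hsq
          (.of_forall fun ω => ?_)
        · dsimp only [f]
          split_ifs
          exacts [thresholdLoss_nonneg _ _ _, le_rfl]
        · have hg : Measurable (thresholdLoss θ (Y ω)) :=
            (measurable_thresholdLoss θ).comp (measurable_const.prodMk measurable_id)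
          exact (integral_ite_eq_mul_integral hJ hR hq hlaw hg).trans_le
            (mul_le_mul_of_nonneg_left (integral_thresholdLoss_le hα hcdf θ (Y ω)) hq)
    _ = q * (α * ∫ ω, (θ - Y ω) ^ 2 ∂μ) := by rw [integral_const_mul, integral_const_mul]

variable [Fintype β] {M : β → Ω → ℝ} {s : β → Prop} [DecidablePred s]

lemma integrable_ite_comp_thresholdLoss (hJ : Measurable J) (hR : Measurable R)
    (hM : ∀ j, s j → Measurable (M j)) (hMb : ∀ j, s j → ∃ C, ∀ ω, |M j ω| ≤ C)
    (θ : β → ℝ) :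
    Integrable (fun ω => if s (J ω) then thresholdLoss (θ (J ω)) (M (J ω) ω) (R ω) else 0) μ := by
  rw [funext fun ω =>
    ite_eq_sum_filter_ite (fun j ω => thresholdLoss (θ j) (M j ω) (R ω)) ω (J ω)]
  refine integrable_finsetSum _ fun j hj => ?_
  obtain ⟨C, hC⟩ := hMb j (Finset.mem_filter.1 hj).2
  exact integrable_ite_thresholdLoss hJ hR (hM j (Finset.mem_filter.1 hj).2) hC j (θ j)

lemma integral_ite_comp_thresholdLoss_le (hJ : Measurable J) (hR : Measurable R)
    (hM : ∀ j, s j → Measurable (M j)) (hMb : ∀ j, s j → ∃ C, ∀ ω, |M j ω| ≤ C)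
    (hind : ∀ j, s j → IndepFun (fun ω => (J ω, R ω)) (M j) μ)
    {p : β → ℝ} (hp : ∀ j, 0 ≤ p j) {ν : β → Measure ℝ} [∀ j, IsFiniteMeasure (ν j)]
    (hlaw : ∀ j B, MeasurableSet B →
      μ {ω | J ω = j ∧ R ω ∈ B} = ENNReal.ofReal (p j) * ν j B)
    {α : ℝ} (hα : 0 ≤ α)
    (hcdf : ∀ j x y, x ≤ y → (ν j).real (Iic y) - (ν j).real (Iic x) ≤ α * (y - x))
    (θ : β → ℝ) :
    ∫ ω, (if s (J ω) then thresholdLoss (θ (J ω)) (M (J ω) ω) (R ω) else 0) ∂μ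
      ≤ 2 * α * ∑ j, p j * (if s j then ∫ ω, (M j ω - ∫ ω', M j ω' ∂μ) ^ 2 ∂μ else 0)
        + 2 * α * ∑ j, p j * (if s j then (θ j - ∫ ω', M j ω' ∂μ) ^ 2 else 0) := by
  have hint : ∀ j ∈ Finset.univ.filter s,
      Integrable (fun ω => if J ω = j then thresholdLoss (θ j) (M j ω) (R ω) else 0) μ :=
    fun j hj => by
      obtain ⟨C, hC⟩ := hMb j (Finset.mem_filter.1 hj).2
      exact integrable_ite_thresholdLoss hJ hR (hM j (Finset.mem_filter.1 hj).2) hC j (θ j)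
  rw [funext fun ω =>
      ite_eq_sum_filter_ite (fun j ω => thresholdLoss (θ j) (M j ω) (R ω)) ω (J ω),
    integral_finsetSum _ hint, Finset.mul_sum, Finset.mul_sum, ← Finset.sum_add_distrib,
    Finset.sum_filter]
  refine Finset.sum_le_sum fun j _ => ?_
  split_ifs with hj
  · obtain ⟨C, hC⟩ := hMb j hj
    have hL2 : MemLp (M j) 2 μ := MemLp.of_bound (hM j hj).aestronglyMeasurable C
      (.of_forall fun ω => (Real.norm_eq_abs _).trans_le (hC ω))
    have hvar : 0 ≤ ∫ ω, (M j ω - ∫ ω', M j ω' ∂μ) ^ 2 ∂μ := by positivity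
    have hbias : 0 ≤ (θ j - ∫ ω', M j ω' ∂μ) ^ 2 := by positivity
    calc _ ≤ p j * (α * ∫ ω, (θ j - M j ω) ^ 2 ∂μ) :=
          integral_ite_thresholdLoss_le hJ hR (hM j hj) hC (hind j hj) (hp j) (hlaw j) hα
            (hcdf j) (θ j)
      _ ≤ _ := by
          rw [integral_const_sub_sq hL2]
          have := mul_nonneg (hp j) hα
          nlinarith
  · simp

end PolicyError

theorem stmt6_general (m n : ℕ)
    (a : Fin n → Fin m → ℝ) (ha : ∀ j i, 0 ≤ a j i)
    (p : Fin n → ℝ) (hp : ∀ j, 0 < p j)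
    (ν : Fin n → Measure ℝ) (hprob : ∀ j, IsProbabilityMeasure (ν j))
    -- Assumption 3: compact convex Ω ⊆ ℝ^m_{≥0}, two-sided CDF condition with
    -- constants ᾱ ≥ α̲ > 0; in particular the conditional reward density is ≤ ᾱ
    (Ωset : Set (Fin m → ℝ))
    (hΩcomp : IsCompact Ωset)
    (hΩpos : ∀ μd ∈ Ωset, ∀ i, 0 ≤ μd i)
    (αl αu : ℝ) (hαl : 0 < αl) (hαu : αl ≤ αu)
    (hdens : ∀ j x y, x ≤ y →
      (ν j (Iic y)).toReal - (ν j (Iic x)).toReal ≤ αu * (y - x)) :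
    ∀ N : ℕ, 0 < N →
    ∀ c : Fin m → ℝ, (∀ i, 0 ≤ c i) →
    ∀ (Ωs : Type) (_ : MeasurableSpace Ωs) (μ : Measure Ωs),
      IsProbabilityMeasure μ →
    -- the i.i.d. queries of `I_t` (query `0` is the current one, `1,…,N` future)
    ∀ (J : Fin (N + 1) → Ωs → Fin n) (R : Fin (N + 1) → Ωs → ℝ),
      (∀ τ, Measurable (J τ)) → (∀ τ, Measurable (R τ)) →
      (∀ τ j, ∀ B : Set ℝ, MeasurableSet B →
        μ {ω | J τ ω = j ∧ R τ ω ∈ B} = ENNReal.ofReal (p j) * ν j B) →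
      iIndepFun (fun τ ω => (J τ ω, R τ ω)) μ →
    -- Assumption 3: the per-sample-path LP relaxations admit an optimal dual in Ω
    (∀ c' : Fin m → ℝ, (∀ i, 0 ≤ c' i) → ∀ ω, ∃ μd ∈ Ωset,
      VOffLP m N (fun τ => a (J τ.succ ω)) (fun τ => R τ.succ ω) c' =
        (∑ i, c' i * μd i)
          + ∑ τ : Fin N, max (R τ.succ ω - ∑ i, a (J τ.succ ω) i * μd i) 0) →
    -- the estimator `M̂` (a function of the capacity and the size only,
    -- independent of the future instance `I_{t+1}`)
    ∀ Mhat : (Fin m → ℝ) → (Fin m → ℝ) → ℝ,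
    -- the marginal value `M_{c,a_j}(I_{t+1})` of the future instance
    ∀ Mty : Fin n → Ωs → ℝ,
      (∀ j ω, Mty j ω =
        VOffLP m N (fun τ => a (J τ.succ ω)) (fun τ => R τ.succ ω) c
        - VOffLP m N (fun τ => a (J τ.succ ω)) (fun τ => R τ.succ ω) (c - a j)) →
    -- the policy decision `x̃_t^π`: serve iff `r̃_t ≥ M̂` and `c ≥ ã_t`
    ∀ xpi : Ωs → ℝ,
      (∀ ω, xpi ω =
        if (Mhat c (a (J 0 ω)) ≤ R 0 ω ∧ ∀ i, a (J 0 ω) i ≤ c i) then 1 else 0) →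
    -- the rounded decision and the rounding gap `G_c(I_t)`
    ∀ xround : Ωs → ℝ,
      (∀ ω, xround ω =
        if (Mty (J 0 ω) ω ≤ R 0 ω ∧ ∀ i, a (J 0 ω) i ≤ c i) then 1 else 0) →
    ∀ xstar : Ωs → Fin (N + 1) → ℝ,
      (∀ ω, (∀ τ, xstar ω τ ∈ Icc (0:ℝ) 1) ∧
        (∀ i, ∑ τ, a (J τ ω) i * xstar ω τ ≤ c i) ∧
        (∀ x' : Fin (N + 1) → ℝ, (∀ τ, x' τ ∈ Icc (0:ℝ) 1) →
          (∀ i, ∑ τ, a (J τ ω) i * x' τ ≤ c i) →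
          (∑ τ, R τ ω * x' τ) ≤ ∑ τ, R τ ω * xstar ω τ)) →
    ∀ G : Ωs → ℝ,
      (∀ ω, G ω = R 0 ω * (xstar ω 0 - xround ω)
        + VOffLP m N (fun τ => a (J τ.succ ω)) (fun τ => R τ.succ ω)
            (c - xstar ω 0 • a (J 0 ω))
        - (xround ω * VOffLP m N (fun τ => a (J τ.succ ω)) (fun τ => R τ.succ ω)
            (c - a (J 0 ω))
          + (1 - xround ω) * VOffLP m N (fun τ => a (J τ.succ ω))
              (fun τ => R τ.succ ω) c)) →
    -- decomposition of the myopic regret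
    (∫ ω, (VOffLP m (N + 1) (fun τ => a (J τ ω)) (fun τ => R τ ω) c
      - VOffLP m N (fun τ => a (J τ.succ ω)) (fun τ => R τ.succ ω)
          (c - xpi ω • a (J 0 ω))
      - R 0 ω * xpi ω) ∂μ) ≤
    2 * αu * ∑ j, p j *
        (if ∀ i, a j i ≤ c i then
          ∫ ω, (Mty j ω - ∫ ω', Mty j ω' ∂μ) ^ 2 ∂μ
        else 0)
      + ∫ ω, G ω ∂μ
      + 2 * αu * ∑ j, p j *
          (if ∀ i, a j i ≤ c i then
            (Mhat c (a j) - ∫ ω', Mty j ω' ∂μ) ^ 2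
          else 0) := by
  intro N _ c _ Ωs _ μ _ J R hJ hR hlaw hindep hdual Mhat Mty hMty xpi hxpi xround hxround
    xstar hxstar G hG
  have hMmeas : ∀ j, Measurable (Mty j) := fun j => by
    rw [funext (hMty j)]
    exact (VOffLP.measurable_comp a c (fun τ => hJ τ.succ) (fun τ => hR τ.succ)).sub
      (VOffLP.measurable_comp a (c - a j) (fun τ => hJ τ.succ) (fun τ => hR τ.succ))
  have hMind : ∀ j, IndepFun (fun ω => (J 0 ω, R 0 ω)) (Mty j) μ := fun j => by
    rw [funext (hMty j)]
    exact hindep.indepFun_zero_VOffLP_sub hJ hR c (c - a j)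
  have hMb : ∀ j, (∀ i, a j i ≤ c i) → ∃ C, ∀ ω, |Mty j ω| ≤ C := fun j hj => by
    simpa only [hMty] using VOffLP.exists_abs_sub_le (sz := fun ω τ => a (J τ.succ ω))
      hΩcomp hΩpos (ha j) hj (hdual (c - a j) fun i => sub_nonneg.2 (hj i))
  have hpolicy := integral_ite_comp_thresholdLoss_le (hJ 0) (hR 0) (fun j _ => hMmeas j) hMb
    (fun j _ => hMind j) (fun j => (hp j).le) (hlaw 0) (hαl.le.trans hαu) hdens
    (fun j => Mhat c (a j))
  have hbound := integral_add_le_of_integrable_right (f := G) (integrable_ite_comp_thresholdLoss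
    (μ := μ) (hJ 0) (hR 0) (fun j _ => hMmeas j) hMb fun j => Mhat c (a j))
    (fun ω => by split_ifs; exacts [thresholdLoss_nonneg _ _ _, le_rfl]) hpolicy
  rw [integral_congr_ae (g := fun ω => G ω + if ∀ i, a (J 0 ω) i ≤ c i then
    thresholdLoss (Mhat c (a (J 0 ω))) (Mty (J 0 ω) ω) (R 0 ω) else 0) (.of_forall fun ω => ?_)]
  · linarith
  have hxπ : xpi ω = 0 ∨ xpi ω = 1 := by rw [hxpi ω]; split_ifs <;> simp
  rw [myopic_eq_roundingGap_add (xr := xround ω) (VOffLP.eq_add_of_isOptimal (hxstar ω).1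
    (hxstar ω).2.1 (hxstar ω).2.2) hxπ, ← hG, ← hMty, hxround, hxpi, ite_and_sub_ite_and_mul_eq]

/-- **Lemma (decomposition of the myopic regret).** Under Assumption 3, for the
`M̂`-estimator policy (serve iff `r̃_t ≥ M̂_{c,ã_t}` and `c ≥ ã_t`),
`Myopic_t(π,c) ≤ 2ᾱ·E_{ã_t}[1{c ≥ ã_t}·Var_{I_{t+1}}(M_{c,ã_t}(I_{t+1}))]
+ E_{I_t}[G_c(I_t)]
+ 2ᾱ·E_{ã_t}[1{c ≥ ã_t}·(M̂_{c,ã_t} − E_{I_{t+1}}[M_{c,ã_t}(I_{t+1})])²]`,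
the myopic term being defined relative to the LP relaxation `V̄^Off`. -/
theorem stmt6 (m n : ℕ) (hn : 0 < n)
    (a : Fin n → Fin m → ℝ) (ha : ∀ j i, 0 ≤ a j i)
    (p : Fin n → ℝ) (hp : ∀ j, 0 < p j) (hpsum : ∑ j, p j = 1)
    (ν : Fin n → Measure ℝ) (hprob : ∀ j, IsProbabilityMeasure (ν j))
    -- Assumption 3: compact convex Ω ⊆ ℝ^m_{≥0}, two-sided CDF condition with
    -- constants ᾱ ≥ α̲ > 0; in particular the conditional reward density is ≤ ᾱ
    (Ωset : Set (Fin m → ℝ))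
    (hΩcomp : IsCompact Ωset) (hΩconv : Convex ℝ Ωset)
    (hΩpos : ∀ μd ∈ Ωset, ∀ i, 0 ≤ μd i)
    (αl αu : ℝ) (hαl : 0 < αl) (hαu : αl ≤ αu)
    (hcond : ∀ μ' ∈ Ωset, ∀ μ'' ∈ Ωset,
      αl * ∑ j, p j * (∑ i, a j i * (μ' i - μ'' i)) ^ 2 ≤
        (∑ j, p j * (((ν j (Iic (∑ i, a j i * μ' i))).toReal
          - (ν j (Iic (∑ i, a j i * μ'' i))).toReal) * ∑ i, a j i * (μ' i - μ'' i))) ∧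
      (∑ j, p j * (((ν j (Iic (∑ i, a j i * μ' i))).toReal
          - (ν j (Iic (∑ i, a j i * μ'' i))).toReal) * ∑ i, a j i * (μ' i - μ'' i))) ≤
        αu * ∑ j, p j * (∑ i, a j i * (μ' i - μ'' i)) ^ 2)
    (hdens : ∀ j x y, x ≤ y →
      (ν j (Iic y)).toReal - (ν j (Iic x)).toReal ≤ αu * (y - x)) :
    ∀ N : ℕ, 0 < N →
    ∀ c : Fin m → ℝ, (∀ i, 0 ≤ c i) →
    ∀ (Ωs : Type) (_ : MeasurableSpace Ωs) (μ : Measure Ωs),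
      IsProbabilityMeasure μ →
    -- the i.i.d. queries of `I_t` (query `0` is the current one, `1,…,N` future)
    ∀ (J : Fin (N + 1) → Ωs → Fin n) (R : Fin (N + 1) → Ωs → ℝ),
      (∀ τ, Measurable (J τ)) → (∀ τ, Measurable (R τ)) →
      (∀ τ j, ∀ B : Set ℝ, MeasurableSet B →
        μ {ω | J τ ω = j ∧ R τ ω ∈ B} = ENNReal.ofReal (p j) * ν j B) →
      iIndepFun (fun τ ω => (J τ ω, R τ ω)) μ →
    -- Assumption 3: the per-sample-path LP relaxations admit an optimal dual in Ω
    (∀ c' : Fin m → ℝ, (∀ i, 0 ≤ c' i) → ∀ ω, ∃ μd ∈ Ωset,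
      VOffLP m N (fun τ => a (J τ.succ ω)) (fun τ => R τ.succ ω) c' =
        (∑ i, c' i * μd i)
          + ∑ τ : Fin N, max (R τ.succ ω - ∑ i, a (J τ.succ ω) i * μd i) 0) →
    -- the estimator `M̂` (a function of the capacity and the size only,
    -- independent of the future instance `I_{t+1}`)
    ∀ Mhat : (Fin m → ℝ) → (Fin m → ℝ) → ℝ,
    -- the marginal value `M_{c,a_j}(I_{t+1})` of the future instance
    ∀ Mty : Fin n → Ωs → ℝ,
      (∀ j ω, Mty j ω =
        VOffLP m N (fun τ => a (J τ.succ ω)) (fun τ => R τ.succ ω) c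
        - VOffLP m N (fun τ => a (J τ.succ ω)) (fun τ => R τ.succ ω) (c - a j)) →
    -- the policy decision `x̃_t^π`: serve iff `r̃_t ≥ M̂` and `c ≥ ã_t`
    ∀ xpi : Ωs → ℝ,
      (∀ ω, xpi ω =
        if (Mhat c (a (J 0 ω)) ≤ R 0 ω ∧ ∀ i, a (J 0 ω) i ≤ c i) then 1 else 0) →
    -- the rounded decision and the rounding gap `G_c(I_t)`
    ∀ xround : Ωs → ℝ,
      (∀ ω, xround ω =
        if (Mty (J 0 ω) ω ≤ R 0 ω ∧ ∀ i, a (J 0 ω) i ≤ c i) then 1 else 0) →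
    ∀ xstar : Ωs → Fin (N + 1) → ℝ,
      (∀ ω, (∀ τ, xstar ω τ ∈ Icc (0:ℝ) 1) ∧
        (∀ i, ∑ τ, a (J τ ω) i * xstar ω τ ≤ c i) ∧
        (∀ x' : Fin (N + 1) → ℝ, (∀ τ, x' τ ∈ Icc (0:ℝ) 1) →
          (∀ i, ∑ τ, a (J τ ω) i * x' τ ≤ c i) →
          (∑ τ, R τ ω * x' τ) ≤ ∑ τ, R τ ω * xstar ω τ)) →
    ∀ G : Ωs → ℝ,
      (∀ ω, G ω = R 0 ω * (xstar ω 0 - xround ω)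
        + VOffLP m N (fun τ => a (J τ.succ ω)) (fun τ => R τ.succ ω)
            (c - xstar ω 0 • a (J 0 ω))
        - (xround ω * VOffLP m N (fun τ => a (J τ.succ ω)) (fun τ => R τ.succ ω)
            (c - a (J 0 ω))
          + (1 - xround ω) * VOffLP m N (fun τ => a (J τ.succ ω))
              (fun τ => R τ.succ ω) c)) →
    -- decomposition of the myopic regret
    (∫ ω, (VOffLP m (N + 1) (fun τ => a (J τ ω)) (fun τ => R τ ω) c
      - VOffLP m N (fun τ => a (J τ.succ ω)) (fun τ => R τ.succ ω)
          (c - xpi ω • a (J 0 ω))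
      - R 0 ω * xpi ω) ∂μ) ≤
    2 * αu * ∑ j, p j *
        (if ∀ i, a j i ≤ c i then
          ∫ ω, (Mty j ω - ∫ ω', Mty j ω' ∂μ) ^ 2 ∂μ
        else 0)
      + ∫ ω, G ω ∂μ
      + 2 * αu * ∑ j, p j *
          (if ∀ i, a j i ≤ c i then
            (Mhat c (a j) - ∫ ω', Mty j ω' ∂μ) ^ 2
          else 0) :=
  stmt6_general m n a ha p hp ν hprob Ωset hΩcomp hΩpos αl αu hαl hαu hdens
end

section
/- Under Assumptions 2 and 3, for any c ≥ 0 let μ* ∈ argmin_μ L^Fld_{c,t+1}(μ) with μ* ∈ Ω. Let S = span{a_1,…,a_n} ⊆ ℝ^m, let P_S denote the orthogonal projection onto S, and let β̲ be the smallest positive eigenvalue of E_ã[ã ã^T]. Then for every μ ∈ Ω: L^Fld_{c,t+1}(μ) − L^Fld_{c,t+1}(μ*) ≥ (α̲ β̲ / 2)·‖P_S(μ − μ*)‖_2². -/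
/-!
Along the segment `θ ↦ μ* + θ • d`, `d = μ - μ*`, the fluid dual has the subgradient
`D θ = ⟪g (μ* + θ • d), d⟫` with `g μ = c / N + ∑ⱼ pⱼ (Fⱼ ⟪aⱼ, μ⟫ - 1) aⱼ`, because
`t ↦ ∫ (r - t)⁺ dνⱼ` has slope `Fⱼ t - 1`. Assumption 3 makes `D` strongly increasing,
`D θ' - D θ ≥ α̲ q (θ' - θ)` with `q = ∑ⱼ pⱼ ⟪aⱼ, d⟫²`, so summing subgradient inequalities over
ever finer grids of `[ε, 1]` gives `L μ - L (μ* + ε • d) ≥ (1 - ε) D ε + α̲ q (1 - ε)² / 2`.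
Minimality of `μ*` forces `D ε ≥ 0`, and `ε → 0` yields `L μ - L μ* ≥ α̲ q / 2`.
Finally `q = ⟪M w, w⟫` for `w = P_S d`, and `S ⊥ ker M`, so the spectral decomposition of `M`
gives `q ≥ β̲ ‖w‖²`.
-/

open MeasureTheory Set Finset Filter Topology
open scoped RealInnerProductSpace ENNReal

section Segment

variable {φ D : ℝ → ℝ} {κ s t : ℝ}

lemma le_sub_of_subgradient_of_strongMono_nat
    (hsub : ∀ θ ∈ Icc s t, ∀ θ' ∈ Icc s t, (θ' - θ) * D θ ≤ φ θ' - φ θ)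
    (hmono : ∀ θ ∈ Icc s t, D s + κ * (θ - s) ≤ D θ)
    {h : ℝ} (hh : 0 ≤ h) (k : ℕ) (hk : s + k * h ≤ t) :
    k * h * D s + κ * h ^ 2 * (k * (k - 1) / 2) ≤ φ (s + k * h) - φ s := by
  induction k with
  | zero => simp
  | succ k ih =>
    push_cast at hk ⊢
    have hkh : 0 ≤ (k : ℝ) * h := by positivity
    have hk₀ : s + k * h ∈ Icc s t := ⟨by linarith, by linarith⟩
    have hk₁ : s + (k + 1) * h ∈ Icc s t := ⟨by linarith, hk⟩
    have hstep := hsub _ hk₀ _ hk₁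
    have hD := mul_le_mul_of_nonneg_left (hmono _ hk₀) hh
    nlinarith [ih hk₀.2]

lemma le_sub_of_subgradient_of_strongMono (hst : s ≤ t)
    (hsub : ∀ θ ∈ Icc s t, ∀ θ' ∈ Icc s t, (θ' - θ) * D θ ≤ φ θ' - φ θ)
    (hmono : ∀ θ ∈ Icc s t, D s + κ * (θ - s) ≤ D θ) :
    (t - s) * D s + κ * (t - s) ^ 2 / 2 ≤ φ t - φ s := by
  have hgrid : ∀ K : ℕ, 0 < K →
      (t - s) * D s + κ * (t - s) ^ 2 * (1 - 1 / (K : ℝ)) / 2 ≤ φ t - φ s := by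
    intro K hK
    have hK : (0 : ℝ) < K := by exact_mod_cast hK
    have hKt : s + K * ((t - s) / K) = t := by field_simp; ring
    have h := le_sub_of_subgradient_of_strongMono_nat hsub hmono
      (div_nonneg (sub_nonneg.2 hst) hK.le) K hKt.le
    rw [hKt] at h
    convert h using 1
    field_simp
  have hlim : Tendsto (fun K : ℕ => (t - s) * D s + κ * (t - s) ^ 2 * (1 - 1 / (K : ℝ)) / 2)
      atTop (𝓝 ((t - s) * D s + κ * (t - s) ^ 2 / 2)) := by
    have hc : Continuous fun x : ℝ => (t - s) * D s + κ * (t - s) ^ 2 * (1 - x) / 2 := by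
      fun_prop
    simpa [Function.comp_def] using (hc.tendsto 0).comp tendsto_one_div_atTop_nhds_zero_nat
  exact le_of_tendsto hlim ((eventually_gt_atTop 0).mono hgrid)

lemma half_le_sub_of_isMinOn_of_strongMono
    (hsub : ∀ θ ∈ Icc (0 : ℝ) 1, ∀ θ' ∈ Icc (0 : ℝ) 1, (θ' - θ) * D θ ≤ φ θ' - φ θ)
    (hmono : ∀ θ ∈ Icc (0 : ℝ) 1, ∀ θ' ∈ Icc (0 : ℝ) 1, θ ≤ θ' → D θ + κ * (θ' - θ) ≤ D θ')
    (hmin : IsMinOn φ (Icc 0 1) 0) :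
    κ / 2 ≤ φ 1 - φ 0 := by
  have h0 : (0 : ℝ) ∈ Icc (0 : ℝ) 1 := ⟨le_rfl, zero_le_one⟩
  have hε : ∀ ε ∈ Ioc (0 : ℝ) 1, κ * (1 - ε) ^ 2 / 2 ≤ φ 1 - φ 0 := by
    intro ε ⟨hε0, hε1⟩
    have hεI : ε ∈ Icc (0 : ℝ) 1 := ⟨hε0.le, hε1⟩
    have hIcc : Icc ε 1 ⊆ Icc 0 1 := Icc_subset_Icc_left hε0.le
    -- optimality of `0` forces a nonnegative slope at every `ε > 0`
    have hDε : 0 ≤ D ε := by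
      have := hsub ε hεI 0 h0
      have := isMinOn_iff.1 hmin ε hεI
      nlinarith
    have h := le_sub_of_subgradient_of_strongMono hε1
      (fun θ hθ θ' hθ' => hsub θ (hIcc hθ) θ' (hIcc hθ'))
      (fun θ hθ => hmono ε hεI θ (hIcc hθ) hθ.1)
    have := isMinOn_iff.1 hmin ε hεI
    linarith [mul_nonneg (sub_nonneg.2 hε1) hDε]
  have hlim : Tendsto (fun K : ℕ => κ * (1 - 1 / (K : ℝ)) ^ 2 / 2) atTop (𝓝 (κ / 2)) := by
    have hc : Continuous fun x : ℝ => κ * (1 - x) ^ 2 / 2 := by fun_prop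
    simpa [Function.comp_def] using (hc.tendsto 0).comp tendsto_one_div_atTop_nhds_zero_nat
  refine le_of_tendsto hlim ((eventually_ge_atTop 1).mono fun K hK => hε _ ?_)
  have hK : (1 : ℝ) ≤ K := by exact_mod_cast hK
  exact ⟨by positivity, div_le_one_of_le₀ hK (by positivity)⟩

end Segment

theorem IsMinOn.half_mul_le_sub_of_strongMono_subgradient {E : Type*} [NormedAddCommGroup E]
    [InnerProductSpace ℝ E] {L : E → ℝ} {G : E → E} {Ω : Set E} {q : E → ℝ} {κ : ℝ}
    (hΩ : Convex ℝ Ω) (hq : ∀ (t : ℝ) v, q (t • v) = t ^ 2 * q v)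
    (hsub : ∀ x ∈ Ω, ∀ y ∈ Ω, ⟪G x, y - x⟫ ≤ L y - L x)
    (hmono : ∀ x ∈ Ω, ∀ y ∈ Ω, κ * q (x - y) ≤ ⟪G x - G y, x - y⟫)
    {x₀ : E} (hx₀ : x₀ ∈ Ω) (hmin : IsMinOn L Ω x₀) {x : E} (hx : x ∈ Ω) :
    κ * q (x - x₀) / 2 ≤ L x - L x₀ := by
  set d := x - x₀
  have hseg : ∀ θ ∈ Icc (0 : ℝ) 1, x₀ + θ • d ∈ Ω := fun θ hθ => hΩ.add_smul_sub_mem hx₀ hx hθ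
  have hdiff : ∀ θ θ' : ℝ, x₀ + θ' • d - (x₀ + θ • d) = (θ' - θ) • d := fun θ θ' => by
    rw [sub_smul]; abel
  have h := half_le_sub_of_isMinOn_of_strongMono (φ := fun θ => L (x₀ + θ • d))
    (D := fun θ => ⟪G (x₀ + θ • d), d⟫) (κ := κ * q d)
    (fun θ hθ θ' hθ' => by
      simpa [hdiff, real_inner_smul_right] using hsub _ (hseg θ hθ) _ (hseg θ' hθ'))
    (fun θ hθ θ' hθ' hθθ' => by
      have h := hmono _ (hseg θ' hθ') _ (hseg θ hθ)
      rw [hdiff, hq, real_inner_smul_right, inner_sub_left] at h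
      rcases hθθ'.eq_or_lt with rfl | hlt
      · simp
      · nlinarith)
    (fun θ hθ => by simpa using isMinOn_iff.1 hmin _ (hseg θ hθ))
  simpa [d] using h

lemma ae_mem_withDensity_of_eq_zero {α : Type*} [MeasurableSpace α] {μ : Measure α}
    {g : α → ℝ≥0∞} {s : Set α} (hs : MeasurableSet s) (hg : ∀ x ∉ s, g x = 0) :
    ∀ᵐ x ∂μ.withDensity g, x ∈ s := by
  rw [ae_iff, ← compl_def, withDensity_apply _ hs.compl, setLIntegral_congr_fun hs.compl hg]
  exact lintegral_zero

lemma integrable_max_sub_const_of_ae_le {ν : Measure ℝ} [IsFiniteMeasure ν] {C : ℝ}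
    (hC : ∀ᵐ r ∂ν, r ≤ C) (t : ℝ) : Integrable (fun r => max (r - t) 0) ν := by
  refine (integrable_const (max (C - t) 0)).mono' (by fun_prop) ?_
  filter_upwards [hC] with r hr
  rw [Real.norm_eq_abs, abs_of_nonneg (le_max_right _ _)]
  gcongr

lemma toReal_Iic_sub_one_mul_le_integral_max_sub {ν : Measure ℝ} [IsProbabilityMeasure ν] {t t' : ℝ}
    (ht : Integrable (fun r => max (r - t) 0) ν) (ht' : Integrable (fun r => max (r - t') 0) ν) :
    ((ν (Iic t)).toReal - 1) * (t' - t) ≤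
      ∫ r, max (r - t') 0 ∂ν - ∫ r, max (r - t) 0 ∂ν := by
  have hpt : ∀ r, -(t' - t) * (Ioi t).indicator 1 r ≤ max (r - t') 0 - max (r - t) 0 := by
    intro r
    rcases le_or_gt r t with h | h
    · simp [indicator_of_notMem (Set.notMem_Ioi.2 h), max_eq_right (sub_nonpos.2 h)]
    · rw [indicator_of_mem (Set.mem_Ioi.2 h), max_eq_left (sub_nonneg.2 h.le)]
      simp only [Pi.one_apply]
      linarith [le_max_left (r - t') 0]
  have h := integral_mono ((integrable_const 1 |>.indicator measurableSet_Ioi).const_mul _)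
    (ht'.sub ht) hpt
  rw [integral_const_mul, integral_indicator_one measurableSet_Ioi, ← compl_Iic,
    probReal_compl_eq_one_sub measurableSet_Iic, Pi.sub_def, integral_sub ht' ht,
    measureReal_def] at h
  linarith

section FluidDual

variable {ι E : Type*} [Fintype ι] [NormedAddCommGroup E] [InnerProductSpace ℝ E]
  (c : E) (N : ℝ) (p : ι → ℝ) (a : ι → E) (ν : ι → Measure ℝ)

noncomputable def fluidDual (μ : E) : ℝ :=
  ⟪c, μ⟫ / N + ∑ j, p j * ∫ r, max (r - ⟪a j, μ⟫) 0 ∂ν j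

noncomputable def fluidDualSubgradient (μ : E) : E :=
  N⁻¹ • c + ∑ j, (p j * ((ν j (Iic ⟪a j, μ⟫)).toReal - 1)) • a j

lemma inner_fluidDualSubgradient (μ v : E) :
    ⟪fluidDualSubgradient c N p a ν μ, v⟫ =
      ⟪c, v⟫ / N + ∑ j, p j * ((ν j (Iic ⟪a j, μ⟫)).toReal - 1) * ⟪a j, v⟫ := by
  simp [fluidDualSubgradient, inner_add_left, sum_inner, real_inner_smul_left, div_eq_inv_mul]

lemma inner_fluidDualSubgradient_sub_sub (μ' μ'' : E) :
    ⟪fluidDualSubgradient c N p a ν μ' - fluidDualSubgradient c N p a ν μ'', μ' - μ''⟫ =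
      ∑ j, p j * (((ν j (Iic ⟪a j, μ'⟫)).toReal - (ν j (Iic ⟪a j, μ''⟫)).toReal) *
        ⟪a j, μ' - μ''⟫) := by
  rw [inner_sub_left, inner_fluidDualSubgradient, inner_fluidDualSubgradient,
    add_sub_add_left_eq_sub, ← sum_sub_distrib]
  exact sum_congr rfl fun j _ => by ring

lemma inner_fluidDualSubgradient_le_sub [∀ j, IsProbabilityMeasure (ν j)] (hp : ∀ j, 0 ≤ p j)
    (hint : ∀ j t, Integrable (fun r => max (r - t) 0) (ν j)) (μ μ' : E) :
    ⟪fluidDualSubgradient c N p a ν μ, μ' - μ⟫ ≤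
      fluidDual c N p a ν μ' - fluidDual c N p a ν μ := by
  have h : ∑ j, p j * ((ν j (Iic ⟪a j, μ⟫)).toReal - 1) * ⟪a j, μ' - μ⟫ ≤
      ∑ j, (p j * ∫ r, max (r - ⟪a j, μ'⟫) 0 ∂ν j - p j * ∫ r, max (r - ⟪a j, μ⟫) 0 ∂ν j) := by
    refine sum_le_sum fun j _ => ?_
    rw [mul_assoc, inner_sub_right, ← mul_sub]
    exact mul_le_mul_of_nonneg_left
      (toReal_Iic_sub_one_mul_le_integral_max_sub (hint j _) (hint j _)) (hp j)
  rw [sum_sub_distrib] at h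
  rw [inner_fluidDualSubgradient, fluidDual, fluidDual, inner_sub_right, sub_div]
  linarith

end FluidDual

lemma LinearMap.IsPositive.mul_norm_sq_le_inner_of_mem_orthogonal_ker {E : Type*}
    [NormedAddCommGroup E] [InnerProductSpace ℝ E] [FiniteDimensional ℝ E] {T : E →ₗ[ℝ] E}
    (hT : T.IsPositive) {β : ℝ} (hβ : ∀ e, 0 < e → Module.End.HasEigenvalue T e → β ≤ e)
    {w : E} (hw : w ∈ (LinearMap.ker T)ᗮ) :
    β * ‖w‖ ^ 2 ≤ ⟪T w, w⟫ := by
  set b := hT.isSymmetric.eigenvectorBasis rfl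
  set lam := hT.isSymmetric.eigenvalues rfl
  have hb : ∀ k, T (b k) = lam k • b k := hT.isSymmetric.apply_eigenvectorBasis rfl
  have hTw : ⟪T w, w⟫ = ∑ k, lam k * ⟪b k, w⟫ ^ 2 := by
    rw [← b.sum_inner_mul_inner (T w) w]
    refine sum_congr rfl fun k _ => ?_
    rw [hT.isSymmetric w (b k), hb, real_inner_smul_right, real_inner_comm]
    ring
  have hw2 : ‖w‖ ^ 2 = ∑ k, ⟪b k, w⟫ ^ 2 := by
    rw [← real_inner_self_eq_norm_sq, ← b.sum_inner_mul_inner w w]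
    exact sum_congr rfl fun k _ => by rw [real_inner_comm w (b k)]; ring
  rw [hTw, hw2, mul_sum]
  refine sum_le_sum fun k _ => ?_
  have hlam : 0 ≤ lam k := hT.nonneg_eigenvalues rfl k
  rcases hlam.eq_or_lt with h | h
  · have hker : b k ∈ LinearMap.ker T := by rw [LinearMap.mem_ker, hb, ← h, zero_smul]
    simp [Submodule.inner_right_of_mem_orthogonal hker hw]
  · exact mul_le_mul_of_nonneg_right (hβ _ h (hT.isSymmetric.hasEigenvalue_eigenvalues rfl k))
      (sq_nonneg _)

section Gram

variable {ι n : Type*} [Fintype ι] [Fintype n] [DecidableEq n] {p : ι → ℝ}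
  {a : ι → EuclideanSpace ℝ n} {M : Matrix n n ℝ}

lemma inner_toEuclideanLin_of_eq_sum (hM : ∀ i i', M i i' = ∑ j, p j * a j i * a j i')
    (x y : EuclideanSpace ℝ n) :
    ⟪M.toEuclideanLin x, y⟫ = ∑ j, p j * ⟪a j, x⟫ * ⟪a j, y⟫ := by
  simp only [PiLp.inner_apply, Matrix.ofLp_toLpLin, Matrix.toLin'_apply, Matrix.mulVec,
    dotProduct, hM, RCLike.inner_apply, conj_trivial, sum_mul, mul_sum]
  conv_rhs => rw [sum_comm]; enter [2, i]; rw [sum_comm]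
  exact sum_congr rfl fun _ _ => sum_congr rfl fun _ _ => sum_congr rfl fun _ _ => by ring

lemma isPositive_toEuclideanLin_of_eq_sum (hp : ∀ j, 0 ≤ p j)
    (hM : ∀ i i', M i i' = ∑ j, p j * a j i * a j i') :
    M.toEuclideanLin.IsPositive := by
  refine ⟨fun x y => ?_, fun x => ?_⟩
  · rw [inner_toEuclideanLin_of_eq_sum hM, real_inner_comm, inner_toEuclideanLin_of_eq_sum hM]
    exact sum_congr rfl fun j _ => by ring
  · rw [RCLike.re_to_real, inner_toEuclideanLin_of_eq_sum hM]
    exact sum_nonneg fun j _ => by rw [mul_assoc]; exact mul_nonneg (hp j) (mul_self_nonneg _)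

lemma span_range_le_orthogonal_ker_toEuclideanLin (hp : ∀ j, 0 < p j)
    (hM : ∀ i i', M i i' = ∑ j, p j * a j i * a j i') :
    Submodule.span ℝ (range a) ≤ (LinearMap.ker M.toEuclideanLin)ᗮ := by
  refine Submodule.span_le.2 <| range_subset_iff.2 fun j =>
    (Submodule.mem_orthogonal _ _).2 fun x hx => ?_
  have h : ∑ j, p j * ⟪a j, x⟫ ^ 2 = 0 := by
    simpa [inner_toEuclideanLin_of_eq_sum hM, LinearMap.mem_ker.1 hx, sq, mul_assoc] using
      (inner_toEuclideanLin_of_eq_sum hM x x).symm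
  have hj := (sum_eq_zero_iff_of_nonneg fun j _ => mul_nonneg (hp j).le (sq_nonneg _)).1 h j
    (mem_univ j)
  rw [real_inner_comm]
  simpa [(hp j).ne'] using hj

lemma exists_mulVec_eq_smul_of_hasEigenvalue_toEuclideanLin {e : ℝ}
    (h : Module.End.HasEigenvalue M.toEuclideanLin e) :
    ∃ v : n → ℝ, v ≠ 0 ∧ M.mulVec v = e • v := by
  obtain ⟨x, hx, hx0⟩ := h.exists_hasEigenvector
  refine ⟨WithLp.ofLp x, by simpa using hx0, ?_⟩
  exact congrArg WithLp.ofLp (Module.End.mem_eigenspace_iff.1 hx)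

lemma mul_norm_starProjection_span_sq_le (hp : ∀ j, 0 < p j)
    (hM : ∀ i i', M i i' = ∑ j, p j * a j i * a j i') {β : ℝ}
    (hβ : ∀ e, 0 < e → (∃ v : n → ℝ, v ≠ 0 ∧ M.mulVec v = e • v) → β ≤ e)
    (v : EuclideanSpace ℝ n) :
    β * ‖(Submodule.span ℝ (range a)).starProjection v‖ ^ 2 ≤ ∑ j, p j * ⟪a j, v⟫ ^ 2 := by
  set S := Submodule.span ℝ (range a)
  have hproj : ∀ j, ⟪a j, S.starProjection v⟫ = ⟪a j, v⟫ := fun j => by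
    rw [← S.inner_starProjection_left_eq_right,
      Submodule.starProjection_eq_self_iff.2 (Submodule.subset_span (mem_range_self j))]
  have hT := isPositive_toEuclideanLin_of_eq_sum (fun j => (hp j).le) hM
  calc β * ‖S.starProjection v‖ ^ 2
      ≤ ⟪M.toEuclideanLin (S.starProjection v), S.starProjection v⟫ :=
        hT.mul_norm_sq_le_inner_of_mem_orthogonal_ker
          (fun e he hev => hβ e he (exists_mulVec_eq_smul_of_hasEigenvalue_toEuclideanLin hev))
          (span_range_le_orthogonal_ker_toEuclideanLin hp hM (S.starProjection_apply_mem v))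
    _ = ∑ j, p j * ⟪a j, v⟫ ^ 2 := by
        rw [inner_toEuclideanLin_of_eq_sum hM]
        exact sum_congr rfl fun j _ => by rw [hproj]; ring

end Gram

theorem stmt8_general (m n : ℕ)
    (a : Fin n → EuclideanSpace ℝ (Fin m))
    (p : Fin n → ℝ) (hp : ∀ j, 0 < p j)
    -- Assumption 2: the type-j reward has density `f j` on `[0, u j]`
    (ν : Fin n → Measure ℝ) (hprob : ∀ j, IsProbabilityMeasure (ν j))
    (u : Fin n → ℝ) (f : Fin n → ℝ → ℝ)
    (hν : ∀ j, ν j = volume.withDensity fun r => ENNReal.ofReal (f j r))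
    (hsupp : ∀ j r, r ∉ Icc (0:ℝ) (u j) → f j r = 0)
    -- Assumption 3: compact convex Ω ⊆ ℝ^m_{≥0} and the two-sided CDF condition
    (Ωset : Set (EuclideanSpace ℝ (Fin m)))
    (hΩconv : Convex ℝ Ωset)
    (αl αu : ℝ) (hαl : 0 < αl)
    (hcond : ∀ μ' ∈ Ωset, ∀ μ'' ∈ Ωset,
      αl * ∑ j, p j * ⟪a j, μ' - μ''⟫ ^ 2 ≤
        (∑ j, p j * (((ν j (Iic ⟪a j, μ'⟫)).toReal
          - (ν j (Iic ⟪a j, μ''⟫)).toReal) * ⟪a j, μ' - μ''⟫)) ∧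
      (∑ j, p j * (((ν j (Iic ⟪a j, μ'⟫)).toReal
          - (ν j (Iic ⟪a j, μ''⟫)).toReal) * ⟪a j, μ' - μ''⟫)) ≤
        αu * ∑ j, p j * ⟪a j, μ' - μ''⟫ ^ 2)
    -- the smallest positive eigenvalue β̲ of E_ã[ã ãᵀ] = ∑_j p_j a_j a_jᵀ
    (M : Matrix (Fin m) (Fin m) ℝ) (hM : ∀ i i', M i i' = ∑ j, p j * a j i * a j i')
    (βl : ℝ)
    (hβl : IsLeast {e : ℝ | 0 < e ∧ ∃ v : Fin m → ℝ, v ≠ 0 ∧ M.mulVec v = e • v} βl)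
    -- the subspace spanned by the possible query sizes
    (S : Submodule ℝ (EuclideanSpace ℝ (Fin m))) (hS : S = Submodule.span ℝ (range a))
    -- the limiting dual function at capacity `c ≥ 0`, horizon `s − 1 = N ≥ 1`
    (N : ℕ)
    (c : EuclideanSpace ℝ (Fin m))
    (LFld : EuclideanSpace ℝ (Fin m) → ℝ)
    (hLFld : ∀ μ, LFld μ =
      ⟪c, μ⟫ / N + ∑ j, p j * ∫ r, max (r - ⟪a j, μ⟫) 0 ∂ν j)
    (μstar : EuclideanSpace ℝ (Fin m))
    (hμstar : μstar ∈ Ωset ∧ ∀ μ ∈ Ωset, LFld μstar ≤ LFld μ) :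
    ∀ μ ∈ Ωset,
      αl * βl / 2 *
        ‖(S.orthogonalProjectionOnto (μ - μstar) : EuclideanSpace ℝ (Fin m))‖ ^ 2 ≤
      LFld μ - LFld μstar := by
  intro μ hμ
  subst hS
  have hint : ∀ j t, Integrable (fun r => max (r - t) 0) (ν j) := fun j => by
    have hsupp' : ∀ᵐ r ∂ν j, r ∈ Icc 0 (u j) := hν j ▸
      ae_mem_withDensity_of_eq_zero measurableSet_Icc fun r hr => by simp [hsupp j r hr]
    exact integrable_max_sub_const_of_ae_le (hsupp'.mono fun r hr => hr.2)
  have hgrowth := IsMinOn.half_mul_le_sub_of_strongMono_subgradient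
    (G := fluidDualSubgradient c N p a ν) (q := fun v => ∑ j, p j * ⟪a j, v⟫ ^ 2) hΩconv
    (fun t v => by
      simp only [real_inner_smul_right, mul_pow, mul_sum]
      exact sum_congr rfl fun j _ => by ring)
    (fun x _ y _ => (funext hLFld : LFld = fluidDual c N p a ν) ▸
      inner_fluidDualSubgradient_le_sub c N p a ν (fun j => (hp j).le) hint x y)
    (fun x hx y hy => (inner_fluidDualSubgradient_sub_sub c N p a ν x y).symm ▸
      (hcond x hx y hy).1)
    hμstar.1 (isMinOn_iff.2 hμstar.2) hμ
  have hgram := mul_norm_starProjection_span_sq_le hp hM (fun e he hev => hβl.2 ⟨he, hev⟩)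
    (μ - μstar)
  rw [Submodule.coe_orthogonalProjectionOnto_apply]
  linarith [mul_le_mul_of_nonneg_left hgram hαl.le]

/-- **Lemma (second-order growth of the limiting dual function).**
Under Assumptions 2 and 3, for any `c ≥ 0`, a minimizer `μ* ∈ Ω` of the limiting
dual function `L^Fld_{c,t+1}` satisfies, for every `μ ∈ Ω`,
`L^Fld(μ) − L^Fld(μ*) ≥ (α̲·β̲/2)·‖P_S(μ − μ*)‖₂²`, where `S = span{a₁,…,aₙ}`,
`P_S` is the orthogonal projection onto `S`, and `β̲` is the smallest positive
eigenvalue of `E_ã[ã ãᵀ]`. -/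
theorem stmt8 (m n : ℕ) (hn : 0 < n)
    (a : Fin n → EuclideanSpace ℝ (Fin m)) (ha : ∀ j i, 0 ≤ a j i)
    (p : Fin n → ℝ) (hp : ∀ j, 0 < p j) (hpsum : ∑ j, p j = 1)
    -- Assumption 2: the type-j reward has density `f j` on `[0, u j]`
    -- with `α ≤ f j ≤ β` there
    (ν : Fin n → Measure ℝ) (hprob : ∀ j, IsProbabilityMeasure (ν j))
    (u : Fin n → ℝ) (f : Fin n → ℝ → ℝ) (α β : ℝ) (hα : 0 < α) (hαβ : α ≤ β)
    (hν : ∀ j, ν j = volume.withDensity fun r => ENNReal.ofReal (f j r))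
    (hsupp : ∀ j r, r ∉ Icc (0:ℝ) (u j) → f j r = 0)
    (hf : ∀ j, ∀ r ∈ Icc (0:ℝ) (u j), α ≤ f j r ∧ f j r ≤ β)
    -- Assumption 3: compact convex Ω ⊆ ℝ^m_{≥0} and the two-sided CDF condition
    (Ωset : Set (EuclideanSpace ℝ (Fin m)))
    (hΩcomp : IsCompact Ωset) (hΩconv : Convex ℝ Ωset)
    (hΩpos : ∀ μ ∈ Ωset, ∀ i, 0 ≤ μ i)
    (αl αu : ℝ) (hαl : 0 < αl) (hαu : αl ≤ αu)
    (hcond : ∀ μ' ∈ Ωset, ∀ μ'' ∈ Ωset,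
      αl * ∑ j, p j * ⟪a j, μ' - μ''⟫ ^ 2 ≤
        (∑ j, p j * (((ν j (Iic ⟪a j, μ'⟫)).toReal
          - (ν j (Iic ⟪a j, μ''⟫)).toReal) * ⟪a j, μ' - μ''⟫)) ∧
      (∑ j, p j * (((ν j (Iic ⟪a j, μ'⟫)).toReal
          - (ν j (Iic ⟪a j, μ''⟫)).toReal) * ⟪a j, μ' - μ''⟫)) ≤
        αu * ∑ j, p j * ⟪a j, μ' - μ''⟫ ^ 2)
    -- the smallest positive eigenvalue β̲ of E_ã[ã ãᵀ] = ∑_j p_j a_j a_jᵀ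
    (M : Matrix (Fin m) (Fin m) ℝ) (hM : ∀ i i', M i i' = ∑ j, p j * a j i * a j i')
    (βl : ℝ)
    (hβl : IsLeast {e : ℝ | 0 < e ∧ ∃ v : Fin m → ℝ, v ≠ 0 ∧ M.mulVec v = e • v} βl)
    -- the subspace spanned by the possible query sizes
    (S : Submodule ℝ (EuclideanSpace ℝ (Fin m))) (hS : S = Submodule.span ℝ (range a))
    -- the limiting dual function at capacity `c ≥ 0`, horizon `s − 1 = N ≥ 1`
    (N : ℕ) (hN : 0 < N)
    (c : EuclideanSpace ℝ (Fin m)) (hc : ∀ i, 0 ≤ c i)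
    (LFld : EuclideanSpace ℝ (Fin m) → ℝ)
    (hLFld : ∀ μ, LFld μ =
      ⟪c, μ⟫ / N + ∑ j, p j * ∫ r, max (r - ⟪a j, μ⟫) 0 ∂ν j)
    (μstar : EuclideanSpace ℝ (Fin m))
    (hμstar : μstar ∈ Ωset ∧ ∀ μ ∈ Ωset, LFld μstar ≤ LFld μ) :
    ∀ μ ∈ Ωset,
      αl * βl / 2 *
        ‖(S.orthogonalProjectionOnto (μ - μstar) : EuclideanSpace ℝ (Fin m))‖ ^ 2 ≤
      LFld μ - LFld μstar :=
  stmt8_general m n a p hp ν hprob u f hν hsupp Ωset hΩconv αl αu hαl hcond M hM βl hβl S hS N c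
    LFld hLFld μstar hμstar
end
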